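/- For every integer j ≥ 0 there exists a polynomial p with real coefficients of degree exactly j, with leading coefficient e^{−a−b}/j!, such that Φ_j(x) = p(x) for every x ∈ ℤ. -/

import Mathlib

open Complex MeasureTheory
open scoped Real

/-- `Φ_j(x) = (1/(2πi)) ∮_{|z−1|=r} z^{x+n} (z−1)^{−(j+1)} e^{−az − b/z} dz`. -/
noncomputable def Phi (n : ℕ) (a b r : ℝ) (j : ℕ) (x : ℤ) : ℂ :=
  (2 * (Real.pi : ℂ) * Complex.I)⁻¹ *
    ∮ z in C(1, r), z ^ (x + (n : ℤ)) * (z - 1) ^ (-((j : ℤ) + 1)) *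
      Complex.exp (-((a : ℂ) * z) - (b : ℂ) / z)

/-!
Shifting `x` by one multiplies the integrand by `z`, and `z - 1` cancels one factor of
`(z - 1)⁻¹`; hence `Φ_{j+1}(x + 1) - Φ_{j+1}(x) = Φ_j(x)`. By Cauchy's formula `Φ_0` is the
constant `e^{-a-b}`, and `Φ_j` is real because the integrand commutes with conjugation and the
circle is symmetric about the real axis. A function on `ℤ` is determined by its forward
difference and its value at `0`, so `Φ_j` is the Newton series
`∑_{k ≤ j} Φ_{j-k}(0) binom(x, k)` (with `binom(X, k) = descPochhammer k / k!`), whose top term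
is `e^{-a-b} binom(x, j)`.
-/

open Polynomial Finset fwdDiff ComplexConjugate
open scoped Nat

theorem descPochhammer_eval_add_one_sub {R : Type*} [CommRing R] (k : ℕ) (x : R) :
    (descPochhammer R (k + 1)).eval (x + 1) - (descPochhammer R (k + 1)).eval x =
      (k + 1) * (descPochhammer R k).eval x := by
  rw [descPochhammer_succ_eval k x, descPochhammer_succ_left]
  simp only [eval_mul, eval_X, eval_comp, eval_sub, eval_one, add_sub_cancel_right]
  ring

theorem eq_apply_zero_of_fwdDiff_eq_zero {G : Type*} [AddCommGroup G] {f : ℤ → G}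
    (hf : Δ_[1] f = 0) (x : ℤ) : f x = f 0 := by
  have hper : Function.Periodic f 1 := fun y => sub_eq_zero.1 (congrFun hf y)
  simpa using hper.int_mul_eq x

section Newton

variable {K : Type*} [Field K]

noncomputable def newtonPoly (c : ℕ → K) (j : ℕ) : K[X] :=
  ∑ k ∈ range (j + 1), C (c (j - k) / k !) * descPochhammer K k

theorem newtonPoly_eval_zero (c : ℕ → K) (j : ℕ) : (newtonPoly c j).eval 0 = c j := by
  simp [newtonPoly, eval_finsetSum, sum_range_succ']

theorem newtonPoly_eval_add_one_sub [CharZero K] (c : ℕ → K) (j : ℕ) (x : K) :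
    (newtonPoly c (j + 1)).eval (x + 1) - (newtonPoly c (j + 1)).eval x =
      (newtonPoly c j).eval x := by
  simp only [newtonPoly, eval_finsetSum, eval_mul, eval_C, ← sum_sub_distrib, ← mul_sub]
  rw [sum_range_succ' _ (j + 1)]
  simp only [descPochhammer_zero, eval_one, sub_self, mul_zero, add_zero,
    descPochhammer_eval_add_one_sub, Nat.add_sub_add_right, Nat.factorial_succ]
  refine sum_congr rfl fun i _ => ?_
  push_cast
  field_simp

theorem newtonPoly_eq_C_mul_add (c : ℕ → K) (j : ℕ) :
    newtonPoly c j = C (c 0 / j !) * descPochhammer K j +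
      ∑ k ∈ range j, C (c (j - k) / k !) * descPochhammer K k := by
  rw [newtonPoly, sum_range_succ, Nat.sub_self, add_comm]

theorem degree_sum_C_mul_descPochhammer_lt (d : ℕ → K) (j : ℕ) :
    (∑ k ∈ range j, C (d k) * descPochhammer K k).degree < j := by
  refine (degree_sum_le _ _).trans_lt ((Finset.sup_lt_iff (WithBot.bot_lt_coe j)).2 fun k hk => ?_)
  refine degree_le_natDegree.trans_lt (WithBot.coe_lt_coe.2 ?_)
  exact ((natDegree_C_mul_le (d k) _).trans_eq (descPochhammer_natDegree K k)).trans_lt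
    (mem_range.1 hk)

theorem degree_newtonPoly_and_leadingCoeff [CharZero K] {c : ℕ → K} (hc : c 0 ≠ 0) (j : ℕ) :
    (newtonPoly c j).degree = j ∧ (newtonPoly c j).leadingCoeff = c 0 / j ! := by
  have hc' : c 0 / j ! ≠ 0 := div_ne_zero hc (by exact_mod_cast j.factorial_ne_zero)
  have htop : (C (c 0 / j !) * descPochhammer K j).degree = j := by
    rw [degree_C_mul hc', degree_eq_natDegree (monic_descPochhammer K j).ne_zero,
      descPochhammer_natDegree]
  have hlt := htop ▸ degree_sum_C_mul_descPochhammer_lt (fun k => c (j - k) / k !) j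
  rw [newtonPoly_eq_C_mul_add, degree_add_eq_left_of_degree_lt hlt,
    leadingCoeff_add_of_degree_lt' hlt, leadingCoeff_C_mul_of_isUnit hc'.isUnit,
    (monic_descPochhammer K j).leadingCoeff, mul_one]
  exact ⟨htop, rfl⟩

theorem eq_newtonPoly_eval_of_fwdDiff [CharZero K] {F : ℕ → ℤ → K} (h0 : Δ_[1] (F 0) = 0)
    (hF : ∀ j, Δ_[1] (F (j + 1)) = F j) (j : ℕ) (x : ℤ) :
    F j x = (newtonPoly (F · 0) j).eval (x : K) := by
  induction j generalizing x with
  | zero => simp [newtonPoly, eq_apply_zero_of_fwdDiff_eq_zero h0 x]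
  | succ j ih =>
    let G : ℤ → K := fun y => F (j + 1) y - (newtonPoly (F · 0) (j + 1)).eval (y : K)
    have hG : Δ_[1] G = 0 := funext fun y => by
      have hΔ := newtonPoly_eval_add_one_sub (F · 0) j y
      have hΔF : F (j + 1) (y + 1) - F (j + 1) y = F j y := congrFun (hF j) y
      simp only [fwdDiff, G, Int.cast_add, Int.cast_one, Pi.zero_apply]
      linear_combination hΔF - hΔ + ih y
    simpa [G, newtonPoly_eval_zero, sub_eq_zero] using eq_apply_zero_of_fwdDiff_eq_zero hG x

end Newton

theorem circleIntegral_conj {f : ℂ → ℂ} (hf : ∀ z, f (conj z) = conj (f z)) {c : ℂ}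
    (hc : conj c = c) (R : ℝ) :
    conj (∮ z in C(c, R), f z) = -∮ z in C(c, R), f z := by
  set g : ℝ → ℂ := fun θ => deriv (circleMap c R) θ • f (circleMap c R θ)
  have hg : ∀ θ, conj (g θ) = -g (-θ) := fun θ => by
    simp only [g, deriv_circleMap, smul_eq_mul, map_mul, conj_I, ← hf, conj_circleMap, hc,
      map_zero]
    ring
  have hper : Function.Periodic g (2 * π) := fun θ => by
    simp only [g, deriv_circleMap, periodic_circleMap c R θ, periodic_circleMap 0 R θ]
  calc conj (∫ θ in 0..2 * π, g θ) = ∫ θ in 0..2 * π, -g (-θ) := by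
        simp only [← intervalIntegral.intervalIntegral_conj, hg]
    _ = -∫ θ in -(2 * π)..0, g θ := by
        rw [intervalIntegral.integral_neg, intervalIntegral.integral_comp_neg, neg_zero]
    _ = -∫ θ in 0..2 * π, g θ := by
        simpa using congrArg Neg.neg (hper.intervalIntegral_add_eq (-(2 * π)) 0)

theorem zero_notMem_closedBall_one {r : ℝ} (hr1 : r < 1) :
    (0 : ℂ) ∉ Metric.closedBall 1 r := by
  simpa [Metric.mem_closedBall, dist_eq] using hr1

section Phi

variable (a b : ℝ)

noncomputable def phiIntegrand (m e : ℤ) (z : ℂ) : ℂ :=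
  z ^ m * (z - 1) ^ e * exp (-(a * z) - b / z)

theorem Phi_eq_circleIntegral (n : ℕ) (r : ℝ) (j : ℕ) (x : ℤ) :
    Phi n a b r j x = (2 * π * I)⁻¹ * ∮ z in C(1, r), phiIntegrand a b (x + n) (-(j + 1)) z :=
  rfl

theorem phiIntegrand_conj (m e : ℤ) (z : ℂ) :
    phiIntegrand a b m e (conj z) = conj (phiIntegrand a b m e z) := by
  simp [phiIntegrand, ← exp_conj, map_zpow₀]

theorem differentiableAt_phiIntegrand (m e : ℤ) {z : ℂ} (hz0 : z ≠ 0)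
    (hz1 : z ≠ 1 ∨ 0 ≤ e) :
    DifferentiableAt ℂ (phiIntegrand a b m e) z := by
  have hz0' : z ≠ 0 ∨ 0 ≤ m := Or.inl hz0
  have hz1' : z - 1 ≠ 0 ∨ 0 ≤ e := hz1.imp_left sub_ne_zero.2
  unfold phiIntegrand
  fun_prop (disch := assumption)

theorem circleIntegrable_phiIntegrand {r : ℝ} (hr0 : 0 < r) (hr1 : r < 1) (m e : ℤ) :
    CircleIntegrable (phiIntegrand a b m e) 1 r :=
  ContinuousOn.circleIntegrable hr0.le fun _ hz =>
    (differentiableAt_phiIntegrand a b m e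
      (ne_of_mem_of_not_mem (Metric.sphere_subset_closedBall hz) (zero_notMem_closedBall_one hr1))
      (Or.inl (Metric.ne_of_mem_sphere hz hr0.ne'))).continuousAt.continuousWithinAt

theorem phiIntegrand_add_one_sub (m e : ℤ) {z : ℂ} (hz0 : z ≠ 0) (hz1 : z ≠ 1) :
    phiIntegrand a b (m + 1) (e - 1) z - phiIntegrand a b m (e - 1) z =
      phiIntegrand a b m e z := by
  have hz1' : z - 1 ≠ 0 := sub_ne_zero.2 hz1
  simp only [phiIntegrand, zpow_add_one₀ hz0, zpow_sub_one₀ hz1']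
  field_simp

theorem conj_Phi (n : ℕ) (r : ℝ) (j : ℕ) (x : ℤ) :
    conj (Phi n a b r j x) = Phi n a b r j x := by
  have h2πI : conj (2 * π * I : ℂ) = -(2 * π * I) := by simp [map_ofNat]
  rw [Phi_eq_circleIntegral, map_mul, circleIntegral_conj (phiIntegrand_conj a b _ _) (map_one _),
    map_inv₀, h2πI, inv_neg, neg_mul_neg]

theorem Phi_zero_eq_exp {r : ℝ} (hr0 : 0 < r) (hr1 : r < 1) (n : ℕ) (x : ℤ) :
    Phi n a b r 0 x = Real.exp (-a - b) := by
  have hd : DifferentiableOn ℂ (phiIntegrand a b (x + n) 0) (Metric.closedBall 1 r) :=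
    fun z hz => (differentiableAt_phiIntegrand a b _ _
      (ne_of_mem_of_not_mem hz (zero_notMem_closedBall_one hr1))
      (Or.inr le_rfl)).differentiableWithinAt
  have hsplit : phiIntegrand a b (x + n) (-((0 : ℕ) + 1)) =
      fun z => (z - 1)⁻¹ • phiIntegrand a b (x + n) 0 z := by
    funext z
    simp only [phiIntegrand, Nat.cast_zero, zero_add, zpow_neg_one, zpow_zero, mul_one,
      smul_eq_mul]
    ring
  rw [Phi_eq_circleIntegral, hsplit, hd.circleIntegral_sub_inv_smul (Metric.mem_ball_self hr0),
    smul_eq_mul, inv_mul_cancel_left₀ two_pi_I_ne_zero]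
  simp [phiIntegrand]

theorem Phi_succ_add_one_sub {r : ℝ} (hr0 : 0 < r) (hr1 : r < 1) (n j : ℕ) (x : ℤ) :
    Phi n a b r (j + 1) (x + 1) - Phi n a b r (j + 1) x = Phi n a b r j x := by
  have hm : x + 1 + (n : ℤ) = x + n + 1 := by ring
  have he : -(((j + 1 : ℕ) : ℤ) + 1) = -((j : ℤ) + 1) - 1 := by push_cast; ring
  rw [Phi_eq_circleIntegral, Phi_eq_circleIntegral, Phi_eq_circleIntegral, hm, he, ← mul_sub,
    ← circleIntegral.integral_sub (circleIntegrable_phiIntegrand a b hr0 hr1 _ _)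
      (circleIntegrable_phiIntegrand a b hr0 hr1 _ _)]
  congr 1
  refine circleIntegral.integral_congr hr0.le fun z hz => phiIntegrand_add_one_sub a b _ _ ?_ ?_
  · exact ne_of_mem_of_not_mem (Metric.sphere_subset_closedBall hz)
      (zero_notMem_closedBall_one hr1)
  · exact Metric.ne_of_mem_sphere hz hr0.ne'

end Phi

theorem stmt8_general (n : ℕ) (a b : ℝ)
    (r : ℝ) (hr0 : 0 < r) (hr1 : r < 1) (j : ℕ) :
    ∃ p : Polynomial ℝ,
      p.degree = j ∧
      p.leadingCoeff = Real.exp (-a - b) / (Nat.factorial j) ∧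
      ∀ x : ℤ, Phi n a b r j x = ((p.eval (x : ℝ) : ℝ) : ℂ) := by
  let F : ℕ → ℤ → ℝ := fun i x => (Phi n a b r i x).re
  have hF0 : ∀ x, F 0 x = Real.exp (-a - b) := fun x => by
    simp only [F, Phi_zero_eq_exp a b hr0 hr1, ofReal_re]
  have hF : ∀ i, Δ_[1] (F (i + 1)) = F i := fun i => funext fun x => by
    simp only [fwdDiff, F, ← sub_re, Phi_succ_add_one_sub a b hr0 hr1]
  have hΔF0 : Δ_[1] (F 0) = 0 := funext fun x => by simp [fwdDiff, hF0]
  obtain ⟨hdeg, hlc⟩ := degree_newtonPoly_and_leadingCoeff (c := (F · 0))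
    (by simp [hF0, Real.exp_ne_zero]) j
  refine ⟨newtonPoly (F · 0) j, hdeg, by rw [hlc, hF0], fun x => ?_⟩
  rw [← eq_newtonPoly_eval_of_fwdDiff hΔF0 hF j x]
  exact (conj_eq_iff_re.1 (conj_Phi a b n r j x)).symm

/-- `Φ_j` is (the restriction to `ℤ` of) a real polynomial of degree
exactly `j` with leading coefficient `e^{−a−b}/j!`. -/
theorem stmt8 (n : ℕ) (hn : 1 ≤ n) (a b : ℝ)
    (r : ℝ) (hr0 : 0 < r) (hr1 : r < 1) (j : ℕ) :
    ∃ p : Polynomial ℝ,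
      p.degree = j ∧
      p.leadingCoeff = Real.exp (-a - b) / (Nat.factorial j) ∧
      ∀ x : ℤ, Phi n a b r j x = ((p.eval (x : ℝ) : ℝ) : ℂ) :=
  stmt8_general n a b r hr0 hr1 j
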